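/- Rado's theorem: for y ∈ ℝⁿ, the set {x ∈ ℝⁿ : x ≺ y} of vectors majorized by y equals the convex hull of the set of vectors obtained by permuting the coordinates of y. -/

import Mathlib

open Matrix

noncomputable def sortDesc {n : ℕ} (x : Fin n → ℝ) : Fin n → ℝ :=
  fun i => x (Tuple.sort x i.rev)

noncomputable def psum {n : ℕ} (x : Fin n → ℝ) (k : ℕ) : ℝ :=
  ∑ i ∈ Finset.univ.filter (fun i : Fin n => (i : ℕ) < k), sortDesc x i

def Majorizes {n : ℕ} (x y : Fin n → ℝ) : Prop :=
  (∀ k : ℕ, psum x k ≤ psum y k) ∧ ∑ i, x i = ∑ i, y i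

def WeakMajorizes {n : ℕ} (x y : Fin n → ℝ) : Prop :=
  ∀ k : ℕ, psum x k ≤ psum y k

noncomputable def sqSingular {n : ℕ} (G : Matrix (Fin n) (Fin n) ℂ) : Fin n → ℝ :=
  (Matrix.isHermitian_conjTranspose_mul_self G).eigenvalues

noncomputable def singular {n : ℕ} (G : Matrix (Fin n) (Fin n) ℂ) : Fin n → ℝ :=
  fun i => Real.sqrt (sqSingular G i)

open Finset


lemma sortDesc_antitone {n : ℕ} (x : Fin n → ℝ) : Antitone (sortDesc x) := by
  intro i j hij
  exact Tuple.monotone_sort x (show j.rev ≤ i.rev from Fin.rev_le_rev.2 hij)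

lemma sortDesc_eq_self {n : ℕ} {x : Fin n → ℝ} (hx : Antitone x) : sortDesc x = x := by
  have h : x ∘ (Fin.revPerm : Equiv.Perm (Fin n)) = x ∘ Tuple.sort x := by
    rw [Tuple.comp_sort_eq_comp_iff_monotone]
    intro i j hij
    exact hx (Fin.rev_le_rev.2 hij)
  funext i
  have := congrFun h i.rev
  simp only [Function.comp_apply, Fin.revPerm_apply, Fin.rev_rev] at this
  simpa [sortDesc] using this.symm

lemma sortDesc_comp_perm {n : ℕ} (x : Fin n → ℝ) (π : Equiv.Perm (Fin n)) :
    sortDesc (x ∘ π) = sortDesc x := by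
  funext i
  have := congrFun (Tuple.comp_perm_comp_sort_eq_comp_sort (f := x) (σ := π)) i.rev
  simpa [sortDesc] using this

lemma psum_comp_perm {n : ℕ} (x : Fin n → ℝ) (π : Equiv.Perm (Fin n)) (k : ℕ) :
    psum (x ∘ π) k = psum x k := by
  unfold psum; rw [sortDesc_comp_perm]

lemma aux_le {m n : ℕ} (f : Fin m → Fin n) (hf : StrictMono f) (i : Fin m) : (i : ℕ) ≤ (f i : ℕ) := by
  obtain ⟨v, hv⟩ := i
  induction v with
  | zero => simp
  | succ w ih =>
      have hw : w < m := by omega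
      have h1 : (f ⟨w, hw⟩ : ℕ) < (f ⟨w+1, hv⟩ : ℕ) := hf (by simp [Fin.lt_iff_val_lt_val])
      have h2 := ih hw
      simp only [Fin.val_mk] at h2 ⊢; omega

lemma filter_lt_eq_map {n k : ℕ} :
    Finset.univ.filter (fun i : Fin n => (i : ℕ) < k)
      = Finset.univ.map (Fin.castLEEmb (min_le_right k n)) := by
  ext i
  simp only [mem_filter, mem_univ, true_and, mem_map, Fin.castLEEmb_apply]
  constructor
  · intro h
    exact ⟨⟨i, by omega⟩, by simp [Fin.ext_iff]⟩
  · rintro ⟨j, rfl⟩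
    simpa using j.isLt.trans_le (min_le_left k n)

lemma sum_le_initial {n k : ℕ} {g : Fin n → ℝ} (hg : Antitone g) {t : Finset (Fin n)}
    (ht : t.card = min k n) :
    ∑ j ∈ t, g j ≤ ∑ j ∈ Finset.univ.filter (fun i : Fin n => (i : ℕ) < k), g j := by
  rw [filter_lt_eq_map, Finset.sum_map]
  set m := min k n
  set e := t.orderEmbOfFin ht
  have hrange : t = Finset.univ.map e.toEmbedding := by
    ext j
    simp only [Finset.mem_map, RelEmbedding.coe_toEmbedding, Finset.mem_univ, true_and]
    constructor
    · intro hj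
      have : j ∈ Set.range e := by rw [Finset.range_orderEmbOfFin]; exact hj
      obtain ⟨i, rfl⟩ := this; exact ⟨i, rfl⟩
    · rintro ⟨i, rfl⟩; exact Finset.orderEmbOfFin_mem t ht i
  rw [hrange, Finset.sum_map]
  apply Finset.sum_le_sum
  intro i _
  apply hg
  have := aux_le e e.strictMono i
  simp [Fin.le_iff_val_le_val, this, Fin.castLEEmb]

lemma card_filter_lt {n k : ℕ} :
    (Finset.univ.filter (fun i : Fin n => (i : ℕ) < k)).card = min k n := by
  rw [filter_lt_eq_map, Finset.card_map, Finset.card_univ, Fintype.card_fin]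

/-- the descending sort as x composed with a permutation -/
noncomputable def sortPerm {n : ℕ} (x : Fin n → ℝ) : Equiv.Perm (Fin n) :=
  (Fin.revPerm : Equiv.Perm (Fin n)).trans (Tuple.sort x)

lemma sortDesc_eq_comp {n : ℕ} (x : Fin n → ℝ) : sortDesc x = x ∘ sortPerm x := rfl

/-- A2: any subset of size min k n has sum at most psum x k -/
lemma sum_subset_le_psum {n k : ℕ} (v : Fin n → ℝ) {s : Finset (Fin n)}
    (hs : s.card = min k n) : ∑ i ∈ s, v i ≤ psum v k := by
  have hv : ∀ i, v i = sortDesc v ((sortPerm v).symm i) := by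
    intro i; rw [sortDesc_eq_comp]; simp
  calc ∑ i ∈ s, v i = ∑ i ∈ s, sortDesc v ((sortPerm v).symm i) := by
        exact Finset.sum_congr rfl fun i _ => hv i
    _ = ∑ j ∈ s.image (sortPerm v).symm, sortDesc v j := by
        rw [Finset.sum_image (fun a _ b _ h => (sortPerm v).symm.injective h)]
    _ ≤ psum v k := sum_le_initial (sortDesc_antitone v)
        (by rw [Finset.card_image_of_injective _ (sortPerm v).symm.injective, hs])

/-- A1: psum is attained by a subset of size min k n -/
lemma psum_eq_sum_subset {n k : ℕ} (x : Fin n → ℝ) :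
    ∃ s : Finset (Fin n), s.card = min k n ∧ psum x k = ∑ i ∈ s, x i := by
  refine ⟨(Finset.univ.filter (fun i : Fin n => (i : ℕ) < k)).image (sortPerm x), ?_, ?_⟩
  · rw [Finset.card_image_of_injective _ (sortPerm x).injective, card_filter_lt]
  · rw [Finset.sum_image (fun a _ b _ h => (sortPerm x).injective h)]
    rfl

lemma psum_convex {n k : ℕ} (u v : Fin n → ℝ) {a b : ℝ} (ha : 0 ≤ a) (hb : 0 ≤ b) :
    psum (a • u + b • v) k ≤ a * psum u k + b * psum v k := by
  obtain ⟨s, hs, heq⟩ := psum_eq_sum_subset (x := a • u + b • v) (k := k)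
  rw [heq]
  simp only [Pi.add_apply, Pi.smul_apply, smul_eq_mul]
  rw [Finset.sum_add_distrib, ← Finset.mul_sum, ← Finset.mul_sum]
  gcongr
  · exact sum_subset_le_psum u hs
  · exact sum_subset_le_psum v hs

noncomputable def pref {n : ℕ} (v : Fin n → ℝ) (m : ℕ) : ℝ :=
  ∑ i ∈ Finset.univ.filter (fun i : Fin n => (i : ℕ) < m), v i

lemma psum_antitone_eq {n : ℕ} {x : Fin n → ℝ} (hx : Antitone x) (k : ℕ) :
    psum x k = pref x k := by
  unfold psum pref; rw [sortDesc_eq_self hx]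

lemma majorizes_comp_perm_iff {n : ℕ} {x y : Fin n → ℝ} (π ρ : Equiv.Perm (Fin n)) :
    Majorizes (x ∘ π) (y ∘ ρ) ↔ Majorizes x y := by
  unfold Majorizes
  simp only [Function.comp_apply]
  rw [Equiv.sum_comp π x, Equiv.sum_comp ρ y]
  constructor <;> rintro ⟨h1, h2⟩ <;> refine ⟨fun k => ?_, h2⟩
  · have := h1 k; rwa [psum_comp_perm, psum_comp_perm] at this
  · rw [psum_comp_perm, psum_comp_perm]; exact h1 k

lemma convex_majorizes {n : ℕ} (y : Fin n → ℝ) : Convex ℝ {x : Fin n → ℝ | Majorizes x y} := by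
  intro u hu v hv a b ha hb hab
  constructor
  · intro k
    calc psum (a • u + b • v) k ≤ a * psum u k + b * psum v k := psum_convex u v ha hb
      _ ≤ a * psum y k + b * psum y k := by gcongr; exacts [hu.1 k, hv.1 k]
      _ = psum y k := by rw [← add_mul, hab, one_mul]
  · simp only [Pi.add_apply, Pi.smul_apply, smul_eq_mul]
    rw [Finset.sum_add_distrib, ← Finset.mul_sum, ← Finset.mul_sum, hu.2, hv.2,
      ← add_mul, hab, one_mul]

lemma easy_dir {n : ℕ} (y : Fin n → ℝ) :
    convexHull ℝ {x : Fin n → ℝ | ∃ π : Equiv.Perm (Fin n), x = y ∘ π}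
      ⊆ {x : Fin n → ℝ | Majorizes x y} := by
  apply convexHull_min _ (convex_majorizes y)
  rintro x ⟨π, rfl⟩
  have := (majorizes_comp_perm_iff (x := y) (y := y) π (Equiv.refl _)).2
  simpa using this ⟨fun k => le_refl _, rfl⟩

-- hull invariance lemmas

lemma permSet_comp {n : ℕ} (y : Fin n → ℝ) (τ : Equiv.Perm (Fin n)) :
    {x : Fin n → ℝ | ∃ π : Equiv.Perm (Fin n), x = (y ∘ τ) ∘ π}
      = {x : Fin n → ℝ | ∃ π : Equiv.Perm (Fin n), x = y ∘ π} := by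
  ext x
  constructor
  · rintro ⟨π, rfl⟩; exact ⟨(π.trans τ), rfl⟩
  · rintro ⟨π, rfl⟩; exact ⟨(π.trans τ.symm), by funext i; simp⟩

lemma comp_mem_hull {n : ℕ} {y x : Fin n → ℝ} (τ : Equiv.Perm (Fin n))
    (hx : x ∈ convexHull ℝ {x : Fin n → ℝ | ∃ π : Equiv.Perm (Fin n), x = y ∘ π}) :
    x ∘ τ ∈ convexHull ℝ {x : Fin n → ℝ | ∃ π : Equiv.Perm (Fin n), x = y ∘ π} := by
  set L : (Fin n → ℝ) →ₗ[ℝ] (Fin n → ℝ) := LinearMap.funLeft ℝ ℝ τ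
  have himg : L '' {x : Fin n → ℝ | ∃ π : Equiv.Perm (Fin n), x = y ∘ π}
      = {x : Fin n → ℝ | ∃ π : Equiv.Perm (Fin n), x = y ∘ π} := by
    ext z
    constructor
    · rintro ⟨w, ⟨π, rfl⟩, rfl⟩; exact ⟨τ.trans π, rfl⟩
    · rintro ⟨π, rfl⟩
      exact ⟨y ∘ (τ.symm.trans π), ⟨τ.symm.trans π, rfl⟩, by funext i; simp [L, LinearMap.funLeft]⟩
  have : L x ∈ L '' (convexHull ℝ {x : Fin n → ℝ | ∃ π : Equiv.Perm (Fin n), x = y ∘ π}) :=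
    Set.mem_image_of_mem _ hx
  rwa [L.image_convexHull, himg] at this

lemma pref_succ {n : ℕ} (v : Fin n → ℝ) {m : ℕ} (hm : m < n) :
    pref v (m + 1) = pref v m + v ⟨m, hm⟩ := by
  unfold pref
  have : Finset.univ.filter (fun i : Fin n => (i : ℕ) < m + 1)
      = insert ⟨m, hm⟩ (Finset.univ.filter (fun i : Fin n => (i : ℕ) < m)) := by
    ext i
    simp only [mem_filter, mem_univ, true_and, mem_insert, Fin.ext_iff]
    omega
  rw [this, Finset.sum_insert (by simp)]
  ring

lemma pref_le_of_pointwise {n : ℕ} {v w : Fin n → ℝ} {m : ℕ}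
    (h : ∀ i : Fin n, (i : ℕ) < m → v i ≤ w i) : pref v m ≤ pref w m := by
  apply Finset.sum_le_sum
  intro i hi
  exact h i (by simpa using hi)

lemma pref_update2 {n : ℕ} (y : Fin n → ℝ) {j k : Fin n} (hjk : j ≠ k) (δ : ℝ) (m : ℕ) :
    pref (fun i => if i = j then y j - δ else if i = k then y k + δ else y i) m
      = pref y m + (if (k : ℕ) < m then δ else 0) - (if (j : ℕ) < m then δ else 0) := by
  unfold pref
  have hpt : ∀ i : Fin n, (if i = j then y j - δ else if i = k then y k + δ else y i)
      = y i + (if i = k then δ else 0) - (if i = j then δ else 0) := by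
    intro i
    by_cases h1 : i = j
    · subst h1; simp [hjk]
    · by_cases h2 : i = k <;> simp [h1, h2, hjk.symm]
  simp only [hpt]
  rw [Finset.sum_sub_distrib, Finset.sum_add_distrib, Finset.sum_ite_eq' _ k (fun _ => δ),
    Finset.sum_ite_eq' _ j (fun _ => δ)]
  simp

lemma sum_update2 {n : ℕ} (y : Fin n → ℝ) {j k : Fin n} (hjk : j ≠ k) (δ : ℝ) :
    ∑ i, (if i = j then y j - δ else if i = k then y k + δ else y i) = ∑ i, y i := by
  have hpt : ∀ i : Fin n, (if i = j then y j - δ else if i = k then y k + δ else y i)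
      = y i + (if i = k then δ else 0) - (if i = j then δ else 0) := by
    intro i
    by_cases h1 : i = j
    · subst h1; simp [hjk]
    · by_cases h2 : i = k <;> simp [h1, h2, hjk.symm]
  simp only [hpt]
  rw [Finset.sum_sub_distrib, Finset.sum_add_distrib, Finset.sum_ite_eq' _ k (fun _ => δ),
    Finset.sum_ite_eq' _ j (fun _ => δ)]
  simp

lemma hard_aux {n : ℕ} (x : Fin n → ℝ) (hx : Antitone x) :
    ∀ d (y : Fin n → ℝ), Antitone y → Majorizes x y →
      (Finset.univ.filter (fun i => x i ≠ y i)).card = d →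
      x ∈ convexHull ℝ {z : Fin n → ℝ | ∃ π : Equiv.Perm (Fin n), z = y ∘ π} := by
  intro d
  induction d using Nat.strongRecOn with
  | ind d ih =>
  intro y hy hxy hd
  by_cases hxyeq : x = y
  · subst hxyeq
    exact subset_convexHull ℝ _ ⟨Equiv.refl _, by funext i; simp⟩
  -- pref versions of majorization
  have hpref : ∀ m : ℕ, pref x m ≤ pref y m := fun m => by
    have := hxy.1 m
    rwa [psum_antitone_eq hx, psum_antitone_eq hy] at this
  -- there is an index where y < x
  have hex : ∃ i, y i < x i := by
    by_contra hc
    push_neg at hc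
    obtain ⟨i0, hi0⟩ : ∃ i0, x i0 ≠ y i0 := by
      by_contra hc2; push_neg at hc2; exact hxyeq (funext hc2)
    have : ∑ i, x i < ∑ i, y i :=
      Finset.sum_lt_sum (fun i _ => hc i) ⟨i0, Finset.mem_univ _, (hc i0).lt_of_ne hi0⟩
    exact absurd hxy.2 this.ne
  -- k : minimal index with y k < x k
  have hSne : (Finset.univ.filter (fun i => y i < x i)).Nonempty := by
    obtain ⟨i, hi⟩ := hex; exact ⟨i, by simp [hi]⟩
  set k : Fin n := (Finset.univ.filter (fun i => y i < x i)).min' hSne with hkdef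
  have hk : y k < x k := by
    have := Finset.min'_mem _ hSne
    rw [Finset.mem_filter] at this
    exact this.2
  have hkmin : ∀ i, i < k → x i ≤ y i := by
    intro i hik
    by_contra hc
    push_neg at hc
    exact absurd (Finset.min'_le _ i (by rw [Finset.mem_filter]; exact ⟨Finset.mem_univ _, hc⟩))
      (not_le.2 hik)
  -- j : maximal index < k with x j < y j
  have hkpos : ∃ i, i < k ∧ x i < y i := by
    by_contra hc
    push_neg at hc
    have hpt : ∀ i : Fin n, (i : ℕ) < (k : ℕ) → y i ≤ x i := fun i hik =>
      hc i (Fin.lt_def.2 hik)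
    have h1 : pref y ((k : ℕ) + 1) < pref x ((k : ℕ) + 1) := by
      rw [pref_succ y k.isLt, pref_succ x k.isLt]
      have : pref y (k : ℕ) ≤ pref x (k : ℕ) := pref_le_of_pointwise hpt
      have hk' : y ⟨(k : ℕ), k.isLt⟩ < x ⟨(k : ℕ), k.isLt⟩ := by simpa using hk
      linarith
    exact absurd (hpref ((k : ℕ) + 1)) (not_le.2 h1)
  have hTne : (Finset.univ.filter (fun i => i < k ∧ x i < y i)).Nonempty := by
    obtain ⟨i, h1, h2⟩ := hkpos; exact ⟨i, by simp [h1, h2]⟩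
  set j : Fin n := (Finset.univ.filter (fun i => i < k ∧ x i < y i)).max' hTne with hjdef
  have hjmem := Finset.max'_mem _ hTne
  rw [Finset.mem_filter] at hjmem
  have hjk : j < k := hjmem.2.1
  have hj : x j < y j := hjmem.2.2
  have hbetween : ∀ i, j < i → i < k → x i = y i := by
    intro i h1 h2
    rcases lt_trichotomy (x i) (y i) with h | h | h
    · exact absurd (Finset.le_max' _ i (by rw [Finset.mem_filter]; exact ⟨Finset.mem_univ _, h2, h⟩))
        (not_le.2 h1)
    · exact h
    · exact absurd (hkmin i h2) (not_le.2 h)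
  have hjkne : j ≠ k := hjk.ne
  -- the transfer
  set δ : ℝ := min (y j - x j) (x k - y k) with hδdef
  have hδpos : 0 < δ := lt_min (by linarith) (by linarith)
  have hδ1 : δ ≤ y j - x j := min_le_left _ _
  have hδ2 : δ ≤ x k - y k := min_le_right _ _
  have hxkj : x k ≤ x j := hx hjk.le
  have hykj : y k < y j := by linarith
  set y' : Fin n → ℝ := fun i => if i = j then y j - δ else if i = k then y k + δ else y i
    with hy'def
  have hy'j : y' j = y j - δ := by simp [hy'def]
  have hy'k : y' k = y k + δ := by simp [hy'def, hjkne.symm]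
  have hy'other : ∀ i, i ≠ j → i ≠ k → y' i = y i := by intro i h1 h2; simp [hy'def, h1, h2]
  -- y' is antitone
  have hy' : Antitone y' := by
    intro a b hab
    rcases eq_or_lt_of_le hab with rfl | hab'
    · exact le_rfl
    rcases eq_or_ne a j with rfl | haj
    · rcases eq_or_ne b k with rfl | hbk
      · rw [hy'j, hy'k]; linarith
      · have hbj : b ≠ j := hab'.ne'
        rw [hy'j, hy'other b hbj hbk]
        rcases lt_or_gt_of_ne hbk with h | h
        · have := hbetween b hab' h
          have := hx hab'.le
          linarith
        · have := hy h.le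
          linarith
    · rcases eq_or_ne a k with rfl | hak
      · have hbj : b ≠ j := (hjk.trans hab').ne'
        have hbk : b ≠ k := hab'.ne'
        rw [hy'k, hy'other b hbj hbk]
        have := hy hab'.le
        linarith
      · rw [hy'other a haj hak]
        rcases eq_or_ne b j with rfl | hbj
        · rw [hy'j]
          have := hy hab'.le
          linarith
        · rcases eq_or_ne b k with rfl | hbk
          · rw [hy'k]
            rcases lt_or_gt_of_ne haj with h | h
            · have := hy h.le
              linarith
            · have := hbetween a h hab'
              have := hx hab'.le
              linarith
          · rw [hy'other b hbj hbk]
            exact hy hab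
  -- convex combination decomposition
  set t : ℝ := δ / (y j - y k) with htdef
  have ht0 : 0 ≤ t := div_nonneg hδpos.le (by linarith)
  have ht1 : t ≤ 1 := by
    rw [htdef, div_le_one (by linarith)]
    linarith
  have htmul : t * (y j - y k) = δ := by
    rw [htdef, div_mul_cancel₀]
    linarith
  have hcomb : y' = (1 - t) • y + t • (y ∘ Equiv.swap j k) := by
    funext i
    simp only [Pi.add_apply, Pi.smul_apply, smul_eq_mul, Function.comp_apply]
    by_cases h1 : i = j
    · subst h1
      rw [hy'j, Equiv.swap_apply_left]
      linarith [htmul]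
    · by_cases h2 : i = k
      · subst h2
        rw [hy'k, Equiv.swap_apply_right]
        linarith [htmul]
      · rw [hy'other i h1 h2, Equiv.swap_apply_of_ne_of_ne h1 h2]
        ring
  -- x is majorized by y'
  have hprefy' : ∀ m : ℕ, pref y' m
      = pref y m + (if (k : ℕ) < m then δ else 0) - (if (j : ℕ) < m then δ else 0) := by
    intro m
    rw [hy'def]
    exact pref_update2 y hjkne δ m
  have hkey : ∀ m : ℕ, (j : ℕ) < m → m ≤ (k : ℕ) → pref x m + δ ≤ pref y m := by
    intro m hjm hmk
    have hsub : pref y m - pref x m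
        = ∑ i ∈ Finset.univ.filter (fun i : Fin n => (i : ℕ) < m), (y i - x i) := by
      rw [Finset.sum_sub_distrib]; rfl
    set A : Finset (Fin n) := Finset.univ.filter (fun i : Fin n => (i : ℕ) < m) with hA
    have hsplit := Finset.sum_filter_add_sum_filter_not A (fun i => i ≤ j) (fun i => y i - x i)
    have hfirst : A.filter (fun i => i ≤ j)
        = Finset.univ.filter (fun i : Fin n => (i : ℕ) < (j : ℕ) + 1) := by
      ext i
      simp only [hA, Finset.mem_filter, Finset.mem_univ, true_and, Fin.le_def]
      omega
    have hfirstval : ∑ i ∈ A.filter (fun i => i ≤ j), (y i - x i)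
        = pref y ((j : ℕ) + 1) - pref x ((j : ℕ) + 1) := by
      rw [hfirst]
      rw [Finset.sum_sub_distrib]; rfl
    have hjlt : (j : ℕ) < n := j.isLt
    have hfirstbound : δ ≤ ∑ i ∈ A.filter (fun i => i ≤ j), (y i - x i) := by
      rw [hfirstval, pref_succ y hjlt, pref_succ x hjlt]
      have h1 := hpref (j : ℕ)
      have h2 : x ⟨(j : ℕ), hjlt⟩ = x j := by congr 1
      have h3 : y ⟨(j : ℕ), hjlt⟩ = y j := by congr 1
      rw [h2, h3]
      linarith
    have hsecond : ∑ i ∈ A.filter (fun i => ¬ i ≤ j), (y i - x i) = 0 := by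
      apply Finset.sum_eq_zero
      intro i hi
      rw [Finset.mem_filter, hA, Finset.mem_filter] at hi
      obtain ⟨⟨-, him⟩, hij⟩ := hi
      have h1 : j < i := lt_of_not_ge hij
      have h2 : i < k := Fin.lt_def.2 (lt_of_lt_of_le him hmk)
      rw [hbetween i h1 h2]
      ring
    have : δ ≤ pref y m - pref x m := by
      rw [hsub, ← hsplit, hsecond]
      linarith
    linarith
  have hmaj' : Majorizes x y' := by
    constructor
    · intro m
      rw [psum_antitone_eq hx, psum_antitone_eq hy', hprefy' m]
      by_cases h1 : (k : ℕ) < m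
      · have h2 : (j : ℕ) < m := lt_trans (Fin.lt_def.1 hjk) h1
        rw [if_pos h1, if_pos h2]
        linarith [hpref m]
      · by_cases h2 : (j : ℕ) < m
        · rw [if_neg h1, if_pos h2]
          have := hkey m h2 (le_of_not_gt h1)
          linarith
        · rw [if_neg h1, if_neg h2]
          linarith [hpref m]
    · have hsum := sum_update2 y hjkne δ
      rw [hxy.2, hy'def]
      exact hsum.symm
  -- the number of disagreements strictly decreases
  have hsubD : Finset.univ.filter (fun i => x i ≠ y' i)
      ⊆ Finset.univ.filter (fun i => x i ≠ y i) := by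
    intro i hi
    rw [Finset.mem_filter] at hi ⊢
    refine ⟨Finset.mem_univ _, ?_⟩
    rcases eq_or_ne i j with rfl | h1
    · exact hj.ne
    · rcases eq_or_ne i k with rfl | h2
      · exact hk.ne'
      · rw [← hy'other i h1 h2]; exact hi.2
  have hcardlt : (Finset.univ.filter (fun i => x i ≠ y' i)).card < d := by
    rw [← hd]
    apply Finset.card_lt_card
    rw [Finset.ssubset_iff_of_subset hsubD]
    rcases min_cases (y j - x j) (x k - y k) with ⟨heq, -⟩ | ⟨heq, -⟩
    · refine ⟨j, by simp [hj.ne], ?_⟩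
      simp only [Finset.mem_filter, not_and, not_not]
      intro _
      rw [hy'j, hδdef, heq]
      ring
    · refine ⟨k, by simp [hk.ne'], ?_⟩
      simp only [Finset.mem_filter, not_and, not_not]
      intro _
      rw [hy'k, hδdef, heq]
      ring
  -- conclude by induction and the convex combination
  have hmem' := ih _ hcardlt y' hy' hmaj' rfl
  have hhull : {z : Fin n → ℝ | ∃ π : Equiv.Perm (Fin n), z = y' ∘ π}
      ⊆ convexHull ℝ {z : Fin n → ℝ | ∃ π : Equiv.Perm (Fin n), z = y ∘ π} := by
    rintro z ⟨π, rfl⟩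
    have hdecomp : y' ∘ π = (1 - t) • (y ∘ π) + t • (y ∘ (π.trans (Equiv.swap j k))) := by
      funext i
      rw [hcomb]
      simp [Equiv.trans_apply]
    rw [hdecomp]
    refine convex_convexHull ℝ _ ?_ ?_ (by linarith) ht0 (by ring)
    · exact subset_convexHull ℝ _ ⟨π, rfl⟩
    · exact subset_convexHull ℝ _ ⟨π.trans (Equiv.swap j k), rfl⟩
  exact convexHull_min hhull (convex_convexHull ℝ _) hmem'


theorem stmt16 {n : ℕ} (y : Fin n → ℝ) :
    {x : Fin n → ℝ | Majorizes x y} =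
      convexHull ℝ {x : Fin n → ℝ | ∃ π : Equiv.Perm (Fin n), x = y ∘ π} := by
  apply Set.Subset.antisymm _ (easy_dir y)
  intro x hx
  have hxs : Antitone (sortDesc x) := sortDesc_antitone x
  have hys : Antitone (sortDesc y) := sortDesc_antitone y
  have hmaj : Majorizes (sortDesc x) (sortDesc y) := by
    rw [sortDesc_eq_comp x, sortDesc_eq_comp y]
    exact (majorizes_comp_perm_iff (sortPerm x) (sortPerm y)).2 hx
  have hmem : sortDesc x ∈ convexHull ℝ
      {z : Fin n → ℝ | ∃ π : Equiv.Perm (Fin n), z = sortDesc y ∘ π} :=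
    hard_aux (sortDesc x) hxs _ (sortDesc y) hys hmaj rfl
  have hsets : {z : Fin n → ℝ | ∃ π : Equiv.Perm (Fin n), z = sortDesc y ∘ π}
      = {z : Fin n → ℝ | ∃ π : Equiv.Perm (Fin n), z = y ∘ π} := by
    rw [sortDesc_eq_comp y]
    exact permSet_comp y (sortPerm y)
  rw [hsets] at hmem
  have hfin := comp_mem_hull (y := y) (x := sortDesc x) (sortPerm x).symm hmem
  have hxeq : sortDesc x ∘ (sortPerm x).symm = x := by
    funext i
    rw [sortDesc_eq_comp x]
    simp
  rwa [hxeq] at hfin
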